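/- Let l be a positive integer, n a nonzero integer, λ a nonnegative integer, 0 ≤ j ≤ |n|−1, 0 ≤ u ≤ 2l−1, and α ∈ ℝ. Then the function W̃_n^{j,u}F_{n,λ,l} = (W_n^{j,u}F_{n,λ,l}) ∘ S_{2l} : ℝ³ → ℂ satisfies ℒ_α(W̃_n^{j,u}F_{n,λ,l}) = (π|n|/2)(2λ + 1 − α·sgn n) · W̃_n^{j,u}F_{n,λ,l} pointwise on ℝ³. -/

import Mathlib

noncomputable section

abbrev H3 := ℝ × ℝ × ℝ

/-- P f = ∂f/∂p -/
def Pd (f : H3 → ℂ) : H3 → ℂ := fun x => deriv (fun p => f (p, x.2.1, x.2.2)) x.1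

/-- S f = ∂f/∂s -/
def Sd (f : H3 → ℂ) : H3 → ℂ := fun x => deriv (fun s => f (x.1, x.2.1, s)) x.2.2

/-- Q f = ∂f/∂q + p ∂f/∂s -/
def Qd (f : H3 → ℂ) : H3 → ℂ := fun x =>
  deriv (fun q => f (x.1, q, x.2.2)) x.2.1 + (x.1 : ℂ) * Sd f x

/-- Folland–Stein operator ℒ_α f = (1/4)(−(P²f + Q²f) + iα Sf) -/
def FS (α : ℝ) (f : H3 → ℂ) : H3 → ℂ := fun x =>
  (1 / 4 : ℂ) * (-(Pd (Pd f) x + Qd (Qd f) x) + Complex.I * (α : ℂ) * Sd f x)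

/-- Weil–Brezin transform associated to the lattice N_l -/
def WB (l : ℕ) (n j u : ℤ) (g : ℝ → ℂ) : H3 → ℂ := fun x =>
  Complex.exp (2 * Real.pi * Complex.I * (n : ℂ) * (x.2.2 : ℂ)) *
    ∑' k : ℤ,
      g (x.1 + (k : ℝ) + (j : ℝ) / |(n : ℝ)| + (u : ℝ) / ((l : ℝ) * (n : ℝ))) *
        Complex.exp (2 * Real.pi * Complex.I * (n : ℂ) *
          ((((k : ℝ) + (j : ℝ) / |(n : ℝ)| + (u : ℝ) / ((l : ℝ) * (n : ℝ))) : ℝ) : ℂ) *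
          (x.2.1 : ℂ))

/-- S_{2l}(p,q,s) = (p/√(2l), √(2l)q, s) -/
def S2l (l : ℕ) : H3 → H3 := fun x =>
  (x.1 / Real.sqrt (2 * l), Real.sqrt (2 * l) * x.2.1, x.2.2)

/-- physicists' Hermite polynomials: H₀ = 1, H_{λ+1} = 2X·H_λ − H_λ' -/
def physHermite : ℕ → Polynomial ℝ
  | 0 => 1
  | (lam + 1) => 2 * Polynomial.X * physHermite lam - (physHermite lam).derivative

/-- F_{n,λ,l}(x) = H_λ(2√(lπ|n|) x) e^{−2lπ|n|x²} -/
def Fnll (l : ℕ) (n : ℤ) (lam : ℕ) : ℝ → ℂ := fun x =>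
  (((physHermite lam).eval (2 * Real.sqrt ((l : ℝ) * Real.pi * |(n : ℝ)|) * x) *
    Real.exp (-2 * (l : ℝ) * Real.pi * |(n : ℝ)| * x ^ 2) : ℝ) : ℂ)

namespace FSWB

lemma physHermite_succ (m : ℕ) : physHermite (m + 1)
    = 2 * Polynomial.X * physHermite m - (physHermite m).derivative := rfl

open Polynomial in
lemma physHermite_deriv : ∀ m : ℕ,
    (physHermite (m + 1)).derivative = C (2 * (m + 1) : ℝ) * physHermite m := by
  intro m
  induction m with
  | zero =>
    simp only [physHermite, derivative_sub, derivative_mul, derivative_ofNat, derivative_X,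
      derivative_one, mul_one, mul_zero, zero_mul, add_zero, zero_add, sub_zero, zero_sub,
      C_mul, C_add, C_1, C_0, map_zero, map_ofNat, zero_mul, mul_zero]
    norm_num
  | succ m ih =>
    rw [physHermite_succ (m+1)]
    simp only [derivative_sub, derivative_mul, derivative_X, derivative_ofNat, derivative_C]
    rw [ih]
    simp only [derivative_mul, derivative_C, zero_mul, zero_add]
    rw [physHermite_succ m]
    simp only [C_mul, C_add, C_1, C_0, map_ofNat, map_natCast]
    push_cast
    ring
open Polynomial in
lemma physHermite_ode : ∀ m : ℕ,
    (physHermite m).derivative.derivative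
      = 2 * X * (physHermite m).derivative - C (2 * m : ℝ) * physHermite m := by
  intro m
  match m with
  | 0 => simp [physHermite]
  | (m+1) =>
    rw [physHermite_deriv m, derivative_mul, derivative_C, physHermite_succ m]
    simp only [C_mul, C_add, C_1, C_0, map_ofNat, map_natCast]
    push_cast
    ring

variable (l : ℕ) (n : ℤ)

def gam : ℝ := 2 * l * Real.pi * |(n : ℝ)|

def GP (P : Polynomial ℝ) : ℝ → ℝ := fun x => P.eval x * Real.exp (-(gam l n) * x ^ 2)

def dP (P : Polynomial ℝ) : Polynomial ℝ :=
  P.derivative - Polynomial.C (2 * gam l n) * (Polynomial.X * P)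

lemma gam_pos (hl : 0 < l) (hn : n ≠ 0) : 0 < gam l n := by
  have h1 : (0:ℝ) < l := by exact_mod_cast hl
  have h2 : (0:ℝ) < |(n:ℝ)| := by
    simp only [abs_pos, ne_eq, Int.cast_eq_zero]
    exact hn
  unfold gam
  positivity

lemma hasDerivAt_GP (P : Polynomial ℝ) (x : ℝ) :
    HasDerivAt (GP l n P) (GP l n (dP l n P) x) x := by
  have h1 : HasDerivAt (fun x : ℝ => P.eval x) (P.derivative.eval x) x := P.hasDerivAt x
  have h2 : HasDerivAt (fun x : ℝ => Real.exp (-(gam l n) * x ^ 2))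
      (Real.exp (-(gam l n) * x ^ 2) * (-(gam l n) * (2 * x))) x := by
    have h3 : HasDerivAt (fun x : ℝ => -(gam l n) * x ^ 2) (-(gam l n) * (2 * x)) x := by
      simpa using (hasDerivAt_pow 2 x).const_mul (-(gam l n))
    simpa using h3.exp
  have := h1.mul h2
  refine this.congr_deriv ?_
  simp only [GP, dP, Polynomial.eval_sub, Polynomial.eval_mul, Polynomial.eval_C,
    Polynomial.eval_X]
  ring

lemma poly_le_exp (P : Polynomial ℝ) :
    ∃ A : ℝ, 0 ≤ A ∧ ∀ x : ℝ, |P.eval x| ≤ A * Real.exp |x| := by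
  refine ⟨∑ i ∈ Finset.range (P.natDegree + 1), |P.coeff i| * (i.factorial : ℝ),
    Finset.sum_nonneg fun i _ => by positivity, fun x => ?_⟩
  have key : ∀ i : ℕ, |x| ^ i ≤ (i.factorial : ℝ) * Real.exp |x| := by
    intro i
    have h1 : |x| ^ i / (i.factorial : ℝ) ≤ Real.exp |x| := by
      refine le_trans ?_ (Real.sum_le_exp_of_nonneg (abs_nonneg x) (i + 1))
      exact Finset.single_le_sum (f := fun j => |x| ^ j / (j.factorial : ℝ))
        (fun j _ => by positivity) (Finset.self_mem_range_succ i)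
    have h2 : (0:ℝ) < (i.factorial : ℝ) := by positivity
    rw [div_le_iff₀ h2] at h1
    linarith [h1]
  calc |P.eval x| = |∑ i ∈ Finset.range (P.natDegree + 1), P.coeff i * x ^ i| := by
        rw [Polynomial.eval_eq_sum_range]
    _ ≤ ∑ i ∈ Finset.range (P.natDegree + 1), |P.coeff i * x ^ i| := Finset.abs_sum_le_sum_abs _ _
    _ ≤ ∑ i ∈ Finset.range (P.natDegree + 1), |P.coeff i| * ((i.factorial : ℝ) * Real.exp |x|) := by
        refine Finset.sum_le_sum fun i _ => ?_
        rw [abs_mul, abs_pow]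
        exact mul_le_mul_of_nonneg_left (key i) (abs_nonneg _)
    _ = (∑ i ∈ Finset.range (P.natDegree + 1), |P.coeff i| * (i.factorial : ℝ)) * Real.exp |x| := by
        rw [Finset.sum_mul]
        exact Finset.sum_congr rfl fun i _ => by ring

lemma GP_bound (hl : 0 < l) (hn : n ≠ 0) (P : Polynomial ℝ) :
    ∃ C : ℝ, 0 ≤ C ∧ ∀ x : ℝ, |GP l n P x| ≤ C * Real.exp (-|x|) := by
  obtain ⟨A, hA0, hA⟩ := poly_le_exp P
  have hg := gam_pos l n hl hn
  refine ⟨A * Real.exp (1 / gam l n), by positivity, fun x => ?_⟩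
  have key : Real.exp |x| * Real.exp (-(gam l n) * x ^ 2)
      ≤ Real.exp (1 / gam l n) * Real.exp (-|x|) := by
    rw [← Real.exp_add, ← Real.exp_add, Real.exp_le_exp]
    have hx2 : x ^ 2 = |x| ^ 2 := (sq_abs x).symm
    rw [hx2]
    have h4 : (gam l n * |x| - 1) ^ 2 ≥ 0 := sq_nonneg _
    rw [show |x| + -(gam l n) * |x| ^ 2 ≤ 1 / gam l n + -|x| ↔
        (|x| + -(gam l n) * |x| ^ 2) * gam l n ≤ (1 / gam l n + -|x|) * gam l n from
      (mul_le_mul_iff_of_pos_right hg).symm]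
    have : (1 / gam l n) * gam l n = 1 := by field_simp
    nlinarith [h4, hg, abs_nonneg x]
  calc |GP l n P x| = |P.eval x| * Real.exp (-(gam l n) * x ^ 2) := by
        rw [GP, abs_mul, Real.abs_exp]
    _ ≤ A * Real.exp |x| * Real.exp (-(gam l n) * x ^ 2) := by
        apply mul_le_mul_of_nonneg_right (hA x) (Real.exp_nonneg _)
    _ = A * (Real.exp |x| * Real.exp (-(gam l n) * x ^ 2)) := by ring
    _ ≤ A * (Real.exp (1 / gam l n) * Real.exp (-|x|)) := by
        exact mul_le_mul_of_nonneg_left key hA0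
    _ = A * Real.exp (1 / gam l n) * Real.exp (-|x|) := by ring

lemma summable_exp_int : Summable (fun k : ℤ => Real.exp (-|(k : ℝ)|)) := by
  apply Summable.of_nat_of_neg
  · have h : ∀ m : ℕ, Real.exp (-|((m:ℤ) : ℝ)|) = Real.exp (-(m:ℝ)) := by
      intro m
      norm_num [abs_of_nonneg]
    simpa [h] using Real.summable_exp_neg_nat
  · have h : ∀ m : ℕ, Real.exp (-|((-(m:ℤ)) : ℝ)|) = Real.exp (-(m:ℝ)) := by
      intro m
      norm_num [abs_of_nonneg]
    simpa [h] using Real.summable_exp_neg_nat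

lemma summable_exp_shift (b : ℝ) : Summable (fun k : ℤ => Real.exp (-|b + (k : ℝ)|)) := by
  apply Summable.of_nonneg_of_le (fun k => (Real.exp_pos _).le) (fun k => ?_)
    (summable_exp_int.mul_left (Real.exp |b|))
  rw [← Real.exp_add, Real.exp_le_exp]
  have h := abs_add_le (b + (k:ℝ)) (-b)
  rw [abs_neg] at h
  have h3 : (b + (k:ℝ)) + (-b) = (k:ℝ) := by ring
  rw [h3] at h
  linarith

lemma summable_of_expbound {F : ℤ → ℂ} (b C : ℝ)
    (h : ∀ k : ℤ, ‖F k‖ ≤ C * Real.exp (-|b + (k : ℝ)|)) : Summable F :=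
  Summable.of_norm_bounded ((summable_exp_shift b).mul_left C) h


variable (j u : ℤ)

def del : ℝ := (j : ℝ) / |(n : ℝ)| + (u : ℝ) / (2 * (l : ℝ) * (n : ℝ))

def aa : ℤ → ℝ := fun k => (k : ℝ) + del l n j u

def cc : ℝ := Real.sqrt (2 * (l : ℝ))

def th : ℤ → ℝ := fun k => 2 * Real.pi * (n : ℝ) * aa l n j u k * cc l

def ee : ℤ → ℝ → ℂ := fun k q => Complex.exp (((th l n j u k * q : ℝ) : ℂ) * Complex.I)

def tm (P : Polynomial ℝ) (p q : ℝ) : ℤ → ℂ :=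
  fun k => ((GP l n P (p / cc l + aa l n j u k) : ℝ) : ℂ) * ee l n j u k q

def TS (P : Polynomial ℝ) (p q : ℝ) : ℂ := ∑' k : ℤ, tm l n j u P p q k

lemma cc_pos (hl : 0 < l) : 0 < cc l := by
  have : (0:ℝ) < 2 * (l:ℝ) := by positivity
  exact Real.sqrt_pos.mpr this

lemma norm_ee (k : ℤ) (q : ℝ) : ‖ee l n j u k q‖ = 1 := by
  rw [ee, Complex.norm_exp_ofReal_mul_I]

lemma norm_tm (P : Polynomial ℝ) (p q : ℝ) (k : ℤ) :
    ‖tm l n j u P p q k‖ = |GP l n P (p / cc l + aa l n j u k)| := by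
  rw [tm, norm_mul, norm_ee, mul_one, Complex.norm_real, Real.norm_eq_abs]

lemma abs_arg (p : ℝ) (k : ℤ) :
    |p / cc l + aa l n j u k| = |(p / cc l + del l n j u) + (k : ℝ)| := by
  congr 1
  rw [aa]
  ring

lemma summable_tm (hl : 0 < l) (hn : n ≠ 0) (P : Polynomial ℝ) (p q : ℝ) :
    Summable (tm l n j u P p q) := by
  obtain ⟨C, hC0, hC⟩ := GP_bound l n hl hn P
  apply summable_of_expbound (p / cc l + del l n j u) C
  intro k
  rw [norm_tm, ← abs_arg]
  exact hC _

lemma hasDerivAt_tm_p (P : Polynomial ℝ) (q : ℝ) (k : ℤ) (y : ℝ) :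
    HasDerivAt (fun p => tm l n j u P p q k)
      (((GP l n (dP l n P) (y / cc l + aa l n j u k) * (1 / cc l) : ℝ) : ℂ)
        * ee l n j u k q) y := by
  have hinner : HasDerivAt (fun p : ℝ => p / cc l + aa l n j u k) (1 / cc l) y := by
    simpa using (((hasDerivAt_id y).div_const (cc l)).add_const (aa l n j u k))
  have hcomp : HasDerivAt (fun p : ℝ => GP l n P (p / cc l + aa l n j u k))
      (GP l n (dP l n P) (y / cc l + aa l n j u k) * (1 / cc l)) y :=
    HasDerivAt.comp y (hasDerivAt_GP l n P _) hinner
  exact (hcomp.ofReal_comp).mul_const (ee l n j u k q)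

lemma hasDerivAt_TS_p (hl : 0 < l) (hn : n ≠ 0) (P : Polynomial ℝ) (q p₀ : ℝ) :
    HasDerivAt (fun p => TS l n j u P p q)
      (((1 / cc l : ℝ) : ℂ) * TS l n j u (dP l n P) p₀ q) p₀ := by
  have hc := cc_pos l hl
  obtain ⟨C, hC0, hC⟩ := GP_bound l n hl hn (dP l n P)
  set b := p₀ / cc l + del l n j u with hb
  have key : HasDerivAt (fun p => TS l n j u P p q)
      (∑' k : ℤ, (((GP l n (dP l n P) (p₀ / cc l + aa l n j u k) * (1 / cc l) : ℝ) : ℂ)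
        * ee l n j u k q)) p₀ := by
    apply hasDerivAt_tsum_of_isPreconnected
      (u := fun k : ℤ => C * Real.exp (1 / cc l) * (1 / cc l) * Real.exp (-|b + (k : ℝ)|))
      (((summable_exp_shift b).mul_left _)) Metric.isOpen_ball
      (convex_ball p₀ 1).isPreconnected
      (fun k y _ => hasDerivAt_tm_p l n j u P q k y)
      (fun k y hy => ?_) (Metric.mem_ball_self one_pos)
      (summable_tm l n j u hl hn P p₀ q) (Metric.mem_ball_self one_pos)
    have h1 : ‖(((GP l n (dP l n P) (y / cc l + aa l n j u k) * (1 / cc l) : ℝ) : ℂ)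
        * ee l n j u k q)‖ = |GP l n (dP l n P) (y / cc l + aa l n j u k)| * (1 / cc l) := by
      rw [norm_mul, norm_ee, mul_one, Complex.norm_real, Real.norm_eq_abs, abs_mul]
      congr 1
      rw [abs_of_pos]
      positivity
    rw [h1]
    have h2 : |GP l n (dP l n P) (y / cc l + aa l n j u k)|
        ≤ C * Real.exp (-|y / cc l + aa l n j u k|) := hC _
    have h3 : Real.exp (-|y / cc l + aa l n j u k|)
        ≤ Real.exp (1 / cc l) * Real.exp (-|b + (k : ℝ)|) := by
      rw [← Real.exp_add, Real.exp_le_exp]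
      have h4 : |p₀ / cc l + aa l n j u k| ≤ |y / cc l + aa l n j u k| + 1 / cc l := by
        have h5 : p₀ / cc l + aa l n j u k
            = (y / cc l + aa l n j u k) + (p₀ - y) / cc l := by ring
        rw [h5]
        refine le_trans (abs_add_le _ _) ?_
        gcongr
        rw [abs_div, abs_of_pos hc]
        gcongr
        rw [Metric.mem_ball, Real.dist_eq] at hy
        rw [abs_sub_comm]
        exact le_of_lt hy
      rw [hb, ← abs_arg]
      linarith
    calc |GP l n (dP l n P) (y / cc l + aa l n j u k)| * (1 / cc l)
        ≤ (C * (Real.exp (1 / cc l) * Real.exp (-|b + (k : ℝ)|))) * (1 / cc l) := by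
          refine mul_le_mul_of_nonneg_right (le_trans h2 ?_) (by positivity)
          exact mul_le_mul_of_nonneg_left h3 hC0
      _ = C * Real.exp (1 / cc l) * (1 / cc l) * Real.exp (-|b + (k : ℝ)|) := by ring
  convert key using 1
  rw [TS, ← tsum_mul_left]
  apply tsum_congr
  intro k
  rw [tm]
  push_cast
  ring

lemma hasDerivAt_tm_q (P : Polynomial ℝ) (p : ℝ) (k : ℤ) (y : ℝ) :
    HasDerivAt (fun q => tm l n j u P p q k)
      (((GP l n P (p / cc l + aa l n j u k) : ℝ) : ℂ)
        * (ee l n j u k y * (((th l n j u k : ℝ) : ℂ) * Complex.I))) y := by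
  have h0 : HasDerivAt (fun q : ℝ => th l n j u k * q) (th l n j u k) y := by
    simpa using (hasDerivAt_id y).const_mul (th l n j u k)
  have h1 : HasDerivAt (fun q : ℝ => ((th l n j u k * q : ℝ) : ℂ) * Complex.I)
      (((th l n j u k : ℝ) : ℂ) * Complex.I) y := (h0.ofReal_comp).mul_const Complex.I
  exact (h1.cexp).const_mul _

lemma GP_X_mul (P : Polynomial ℝ) (x : ℝ) :
    GP l n (Polynomial.X * P) x = x * GP l n P x := by
  simp only [GP, Polynomial.eval_mul, Polynomial.eval_X]
  ring

lemma hasDerivAt_TS_q (hl : 0 < l) (hn : n ≠ 0) (P : Polynomial ℝ) (p q₀ : ℝ) :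
    HasDerivAt (fun q => TS l n j u P p q)
      (((2 * Real.pi * (n : ℝ) * cc l : ℝ) : ℂ) * Complex.I
        * (TS l n j u (Polynomial.X * P) p q₀
            - ((p / cc l : ℝ) : ℂ) * TS l n j u P p q₀)) q₀ := by
  have hc := cc_pos l hl
  obtain ⟨C₁, hC₁0, hC₁⟩ := GP_bound l n hl hn (Polynomial.X * P)
  obtain ⟨C₂, hC₂0, hC₂⟩ := GP_bound l n hl hn P
  set b := p / cc l + del l n j u with hb
  have hreal : ∀ k : ℤ, th l n j u k * GP l n P (p / cc l + aa l n j u k)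
      = 2 * Real.pi * (n : ℝ) * cc l * (GP l n (Polynomial.X * P) (p / cc l + aa l n j u k)
          - p / cc l * GP l n P (p / cc l + aa l n j u k)) := by
    intro k
    rw [GP_X_mul, th]
    ring
  have key : HasDerivAt (fun q => TS l n j u P p q)
      (∑' k : ℤ, (((GP l n P (p / cc l + aa l n j u k) : ℝ) : ℂ)
        * (ee l n j u k q₀ * (((th l n j u k : ℝ) : ℂ) * Complex.I)))) q₀ := by
    apply hasDerivAt_tsum
      (u := fun k : ℤ => 2 * Real.pi * |(n : ℝ)| * cc l * (C₁ + |p| / cc l * C₂)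
        * Real.exp (-|b + (k : ℝ)|))
      ((summable_exp_shift b).mul_left _)
      (fun k y => hasDerivAt_tm_q l n j u P p k y)
      (fun k y => ?_) (summable_tm l n j u hl hn P p q₀)
    have h1 : ‖(((GP l n P (p / cc l + aa l n j u k) : ℝ) : ℂ)
        * (ee l n j u k y * (((th l n j u k : ℝ) : ℂ) * Complex.I)))‖
        = |GP l n P (p / cc l + aa l n j u k)| * |th l n j u k| := by
      rw [norm_mul, norm_mul, norm_ee, norm_mul, Complex.norm_I, mul_one, one_mul,
        Complex.norm_real, Complex.norm_real, Real.norm_eq_abs, Real.norm_eq_abs]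
    rw [h1]
    have h2 : |GP l n P (p / cc l + aa l n j u k)| * |th l n j u k|
        = 2 * Real.pi * |(n : ℝ)| * cc l
          * |GP l n (Polynomial.X * P) (p / cc l + aa l n j u k)
              - p / cc l * GP l n P (p / cc l + aa l n j u k)| := by
      rw [← abs_mul, mul_comm, hreal k, abs_mul]
      congr 1
      rw [abs_mul, abs_mul, abs_mul, abs_of_pos hc, abs_of_pos Real.pi_pos]
      norm_num
    rw [h2]
    have h3 : |GP l n (Polynomial.X * P) (p / cc l + aa l n j u k)
          - p / cc l * GP l n P (p / cc l + aa l n j u k)|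
        ≤ (C₁ + |p| / cc l * C₂) * Real.exp (-|b + (k : ℝ)|) := by
      refine le_trans (abs_sub _ _) ?_
      rw [abs_mul, abs_div, abs_of_pos hc]
      have e1 := hC₁ (p / cc l + aa l n j u k)
      have e2 := hC₂ (p / cc l + aa l n j u k)
      rw [abs_arg] at e1 e2
      rw [hb]
      have e3 : |p| / cc l * |GP l n P (p / cc l + aa l n j u k)|
          ≤ |p| / cc l * (C₂ * Real.exp (-|p / cc l + del l n j u + (k:ℝ)|)) := by
        apply mul_le_mul_of_nonneg_left e2 (by positivity)
      calc |GP l n (Polynomial.X * P) (p / cc l + aa l n j u k)|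
            + |p| / cc l * |GP l n P (p / cc l + aa l n j u k)|
          ≤ C₁ * Real.exp (-|p / cc l + del l n j u + (k:ℝ)|)
            + |p| / cc l * (C₂ * Real.exp (-|p / cc l + del l n j u + (k:ℝ)|)) := by
            exact add_le_add e1 e3
        _ = (C₁ + |p| / cc l * C₂) * Real.exp (-|p / cc l + del l n j u + (k:ℝ)|) := by ring
    calc 2 * Real.pi * |(n : ℝ)| * cc l
          * |GP l n (Polynomial.X * P) (p / cc l + aa l n j u k)
              - p / cc l * GP l n P (p / cc l + aa l n j u k)|
        ≤ 2 * Real.pi * |(n : ℝ)| * cc l * ((C₁ + |p| / cc l * C₂)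
            * Real.exp (-|b + (k : ℝ)|)) := by
          apply mul_le_mul_of_nonneg_left h3 (by positivity)
      _ = 2 * Real.pi * |(n : ℝ)| * cc l * (C₁ + |p| / cc l * C₂)
            * Real.exp (-|b + (k : ℝ)|) := by ring
  convert key using 1
  have hsX := summable_tm l n j u hl hn (Polynomial.X * P) p q₀
  have hsP := summable_tm l n j u hl hn P p q₀
  have hterm : ∀ k : ℤ, (((GP l n P (p / cc l + aa l n j u k) : ℝ) : ℂ)
      * (ee l n j u k q₀ * (((th l n j u k : ℝ) : ℂ) * Complex.I)))
      = ((2 * Real.pi * (n : ℝ) * cc l : ℝ) : ℂ) * Complex.I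
        * (tm l n j u (Polynomial.X * P) p q₀ k
            - ((p / cc l : ℝ) : ℂ) * tm l n j u P p q₀ k) := by
    intro k
    have hC : ((th l n j u k * GP l n P (p / cc l + aa l n j u k) : ℝ) : ℂ)
        = ((2 * Real.pi * (n : ℝ) * cc l * (GP l n (Polynomial.X * P) (p / cc l + aa l n j u k)
            - p / cc l * GP l n P (p / cc l + aa l n j u k)) : ℝ) : ℂ) := by
      exact_mod_cast congrArg Complex.ofReal (hreal k)
    push_cast at hC ⊢
    rw [tm, tm]
    push_cast
    linear_combination (ee l n j u k q₀ * Complex.I) * hC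
  rw [TS, TS]
  calc ((2 * Real.pi * (n : ℝ) * cc l : ℝ) : ℂ) * Complex.I
        * (∑' k, tm l n j u (Polynomial.X * P) p q₀ k
            - ((p / cc l : ℝ) : ℂ) * ∑' k, tm l n j u P p q₀ k)
      = ((2 * Real.pi * (n : ℝ) * cc l : ℝ) : ℂ) * Complex.I
        * (∑' k, (tm l n j u (Polynomial.X * P) p q₀ k
            - ((p / cc l : ℝ) : ℂ) * tm l n j u P p q₀ k)) := by
        rw [Summable.tsum_sub hsX (hsP.mul_left _), tsum_mul_left]
    _ = ∑' k, ((2 * Real.pi * (n : ℝ) * cc l : ℝ) : ℂ) * Complex.I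
        * (tm l n j u (Polynomial.X * P) p q₀ k
            - ((p / cc l : ℝ) : ℂ) * tm l n j u P p q₀ k) := by
        rw [← tsum_mul_left]
    _ = ∑' k, (((GP l n P (p / cc l + aa l n j u k) : ℝ) : ℂ)
        * (ee l n j u k q₀ * (((th l n j u k : ℝ) : ℂ) * Complex.I))) := by
        exact tsum_congr fun k => (hterm k).symm

def Eb : ℝ → ℂ := fun s => Complex.exp (2 * (Real.pi : ℂ) * Complex.I * (n : ℂ) * (s : ℂ))

lemma hasDerivAt_Eb (s : ℝ) :
    HasDerivAt (Eb n) (2 * (Real.pi : ℂ) * Complex.I * (n : ℂ) * Eb n s) s := by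
  have h0 : HasDerivAt (fun s : ℝ => 2 * (Real.pi : ℂ) * Complex.I * (n : ℂ) * (s : ℂ))
      (2 * (Real.pi : ℂ) * Complex.I * (n : ℂ)) s := by
    simpa using ((hasDerivAt_id s).ofReal_comp).const_mul (2 * (Real.pi : ℂ) * Complex.I * (n : ℂ))
  have := h0.cexp
  unfold Eb
  convert this using 1
  rw [mul_comm]

def fsh (K : ℂ) (P : Polynomial ℝ) : H3 → ℂ :=
  fun x => K * (Eb n x.2.2 * TS l n j u P x.1 x.2.1)

lemma Sd_fsh (K : ℂ) (P : Polynomial ℝ) :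
    Sd (fsh l n j u K P) = fsh l n j u (K * (2 * (Real.pi : ℂ) * Complex.I * (n : ℂ))) P := by
  funext x
  rw [Sd]
  have h1 : (fun s : ℝ => fsh l n j u K P (x.1, x.2.1, s))
      = fun s => (K * TS l n j u P x.1 x.2.1) * Eb n s := by
    funext s
    rw [fsh]
    ring
  rw [h1, ((hasDerivAt_Eb n x.2.2).const_mul (K * TS l n j u P x.1 x.2.1)).deriv, fsh]
  ring

lemma Pd_fsh (hl : 0 < l) (hn : n ≠ 0) (K : ℂ) (P : Polynomial ℝ) :
    Pd (fsh l n j u K P) = fsh l n j u (K * ((1 / cc l : ℝ) : ℂ)) (dP l n P) := by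
  funext x
  rw [Pd]
  have h1 : (fun p : ℝ => fsh l n j u K P (p, x.2.1, x.2.2))
      = fun p => (K * Eb n x.2.2) * TS l n j u P p x.2.1 := by
    funext p
    rw [fsh]
    ring
  rw [h1, (((hasDerivAt_TS_p l n j u hl hn P x.2.1 x.1)).const_mul (K * Eb n x.2.2)).deriv, fsh]
  ring

lemma Qd_fsh (hl : 0 < l) (hn : n ≠ 0) (K : ℂ) (P : Polynomial ℝ) :
    Qd (fsh l n j u K P) = fsh l n j u
      (K * (((2 * Real.pi * (n : ℝ) * cc l : ℝ) : ℂ) * Complex.I)) (Polynomial.X * P) := by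
  have hc := (cc_pos l hl).ne'
  funext x
  rw [Qd]
  have h1 : (fun q : ℝ => fsh l n j u K P (x.1, q, x.2.2))
      = fun q => (K * Eb n x.2.2) * TS l n j u P x.1 q := by
    funext q
    rw [fsh]
    ring
  rw [h1, (((hasDerivAt_TS_q l n j u hl hn P x.1 x.2.1)).const_mul (K * Eb n x.2.2)).deriv,
    Sd_fsh, fsh, fsh]
  have hcc : ((cc l : ℝ) : ℂ) ≠ 0 := by exact_mod_cast hc
  push_cast
  field_simp
  ring

open Polynomial in
def bet : ℝ := 2 * Real.sqrt ((l : ℝ) * Real.pi * |(n : ℝ)|)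

def P0 (lam : ℕ) : Polynomial ℝ :=
  (physHermite lam).comp (Polynomial.C (bet l n) * Polynomial.X)

lemma bet_sq : (bet l n) ^ 2 = 2 * gam l n := by
  rw [bet, gam, mul_pow, Real.sq_sqrt (by positivity)]
  ring

open Polynomial in
lemma key_eval (lam : ℕ) (x : ℝ) :
    (dP l n (dP l n (P0 l n lam))).eval x
      = (4 * gam l n ^ 2) * ((Polynomial.X * (Polynomial.X * P0 l n lam)).eval x)
        + (-(2 * gam l n * (2 * lam + 1))) * ((P0 l n lam).eval x) := by
  set H := physHermite lam with hH
  set B := H.derivative.comp (C (bet l n) * X) with hB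
  have s1 : (P0 l n lam).derivative = C (bet l n) * B := by
    rw [P0, derivative_comp]
    simp only [derivative_mul, derivative_C, derivative_X, zero_mul, mul_one, zero_add, hB]
    rfl
  have s2 : B.derivative = C (bet l n) * (H.derivative.derivative.comp (C (bet l n) * X)) := by
    rw [hB, derivative_comp]
    simp only [derivative_mul, derivative_C, derivative_X, zero_mul, mul_one, zero_add]
  have s3 : H.derivative.derivative.comp (C (bet l n) * X)
      = 2 * (C (bet l n) * X) * B - C (2 * lam : ℝ) * (P0 l n lam) := by
    rw [hH, physHermite_ode lam]
    simp only [sub_comp, mul_comp, X_comp, C_comp, ofNat_comp]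
    rw [P0, ← hH, ← hB]
    push_cast
    ring
  have expand : dP l n (dP l n (P0 l n lam))
      = C (bet l n) * (C (bet l n) * (2 * (C (bet l n) * X) * B - C (2 * lam : ℝ) * (P0 l n lam)))
        - C (2 * gam l n) * (P0 l n lam + X * (C (bet l n) * B))
        - C (2 * gam l n) * (X * (C (bet l n) * B - C (2 * gam l n) * (X * (P0 l n lam)))) := by
    rw [dP, dP]
    simp only [derivative_sub, derivative_mul, derivative_C, derivative_X, s1, s2, s3,
      zero_mul, mul_one, zero_add, add_zero, sub_zero]
    ring
  have hb := bet_sq l n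
  rw [expand]
  simp only [eval_sub, eval_add, eval_mul, eval_C, eval_X, eval_ofNat]
  linear_combination (2 * bet l n * x * B.eval x - 2 * (lam : ℝ) * (P0 l n lam).eval x) * hb

lemma TS_split (hl : 0 < l) (hn : n ≠ 0) (A B2 : ℝ) (P Q R : Polynomial ℝ)
    (hP : ∀ x : ℝ, P.eval x = A * Q.eval x + B2 * R.eval x) (p q : ℝ) :
    TS l n j u P p q = (A : ℂ) * TS l n j u Q p q + (B2 : ℂ) * TS l n j u R p q := by
  rw [TS, TS, TS, ← tsum_mul_left, ← tsum_mul_left,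
    ← Summable.tsum_add ((summable_tm l n j u hl hn Q p q).mul_left _)
      ((summable_tm l n j u hl hn R p q).mul_left _)]
  apply tsum_congr
  intro k
  rw [tm, tm, tm]
  have h : GP l n P (p / cc l + aa l n j u k)
      = A * GP l n Q (p / cc l + aa l n j u k) + B2 * GP l n R (p / cc l + aa l n j u k) := by
    rw [GP, GP, GP, hP]
    ring
  rw [h]
  push_cast
  ring

lemma Fnll_eq (lam : ℕ) (t : ℝ) : Fnll l n lam t = ((GP l n (P0 l n lam) t : ℝ) : ℂ) := by
  rw [Fnll]
  have h : (physHermite lam).eval (2 * Real.sqrt ((l : ℝ) * Real.pi * |(n : ℝ)|) * t) *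
      Real.exp (-2 * (l : ℝ) * Real.pi * |(n : ℝ)| * t ^ 2) = GP l n (P0 l n lam) t := by
    rw [GP, P0, Polynomial.eval_comp, Polynomial.eval_mul, Polynomial.eval_C,
      Polynomial.eval_X, bet, gam]
    rw [congrArg Real.exp (show -2 * (l : ℝ) * Real.pi * |(n : ℝ)| * t ^ 2
      = -(2 * (l : ℝ) * Real.pi * |(n : ℝ)|) * t ^ 2 by ring)]
  rw [h]

lemma f_eq (lam : ℕ) :
    (fun y : H3 => WB (2 * l) n j u (Fnll l n lam) (S2l l y)) = fsh l n j u 1 (P0 l n lam) := by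
  funext y
  rw [fsh, one_mul, WB, S2l, Eb, TS]
  congr 1
  apply tsum_congr
  intro k
  have harg : (y.1 / Real.sqrt (2 * (l : ℕ)) + (k : ℝ) + (j : ℝ) / |(n : ℝ)|
      + (u : ℝ) / ((((2 * l : ℕ)) : ℝ) * (n : ℝ))) = y.1 / cc l + aa l n j u k := by
    rw [cc, aa, del]
    push_cast
    ring
  rw [tm, harg, Fnll_eq, ee]
  congr 1
  rw [th, aa, del, cc]
  push_cast
  ring


end FSWB

open FSWB

/-- W̃_n^{j,u}F_{n,λ,l} = (W_n^{j,u}F_{n,λ,l}) ∘ S_{2l} is an eigenfunction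
of ℒ_α on N'_{2l}\ℍ with eigenvalue (π|n|/2)(2λ+1−α·sgn n). -/
theorem FS_WBtilde_eigenfunction (l : ℕ) (hl : 0 < l) (n : ℤ) (hn : n ≠ 0)
    (lam : ℕ) (j u : ℤ) (hj0 : 0 ≤ j) (hj1 : j ≤ |n| - 1)
    (hu0 : 0 ≤ u) (hu1 : u ≤ 2 * (l : ℤ) - 1) (α : ℝ) :
    ∀ x : H3, FS α (fun y => WB (2 * l) n j u (Fnll l n lam) (S2l l y)) x =
      ((Real.pi * |(n : ℝ)| / 2 * (2 * (lam : ℝ) + 1 - α * (n.sign : ℝ)) : ℝ) : ℂ) *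
        WB (2 * l) n j u (Fnll l n lam) (S2l l x) := by
  intro x
  have hccpos := cc_pos l hl
  have hcne : ((cc l : ℝ) : ℂ) ≠ 0 := by exact_mod_cast hccpos.ne'
  have hx : WB (2 * l) n j u (Fnll l n lam) (S2l l x) = fsh l n j u 1 (P0 l n lam) x :=
    congrFun (f_eq l n j u lam) x
  rw [f_eq l n j u lam, hx, FS]
  simp only [Pd_fsh l n j u hl hn, Qd_fsh l n j u hl hn, Sd_fsh l n j u]
  have hsplit : TS l n j u (dP l n (dP l n (P0 l n lam))) x.1 x.2.1
      = ((4 * gam l n ^ 2 : ℝ) : ℂ)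
          * TS l n j u (Polynomial.X * (Polynomial.X * P0 l n lam)) x.1 x.2.1
        + ((-(2 * gam l n * (2 * lam + 1)) : ℝ) : ℂ) * TS l n j u (P0 l n lam) x.1 x.2.1 :=
    TS_split l n j u hl hn _ _ _ _ _ (key_eval l n lam) x.1 x.2.1
  simp only [fsh, hsplit, one_mul]
  set E := Eb n x.2.2
  set T0 := TS l n j u (P0 l n lam) x.1 x.2.1
  set Txx := TS l n j u (Polynomial.X * (Polynomial.X * P0 l n lam)) x.1 x.2.1
  have hcc2 : ((cc l : ℝ) : ℂ) ^ 2 = 2 * (l : ℂ) := by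
    have : (cc l : ℝ) ^ 2 = 2 * (l : ℝ) := Real.sq_sqrt (by positivity)
    exact_mod_cast this
  have hgamC : ((gam l n : ℝ) : ℂ) = 2 * (l : ℂ) * (Real.pi : ℂ) * ((|(n : ℝ)| : ℝ) : ℂ) := by
    rw [gam]
    push_cast
    ring
  have habs : ((|(n : ℝ)| : ℝ) : ℂ) ^ 2 = (n : ℂ) ^ 2 := by
    have : |(n : ℝ)| ^ 2 = (n : ℝ) ^ 2 := sq_abs _
    exact_mod_cast this
  have hsign : ((n.sign : ℤ) : ℂ) * ((|(n : ℝ)| : ℝ) : ℂ) = (n : ℂ) := by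
    have h1 : (n.sign : ℝ) * |(n : ℝ)| = (n : ℝ) := by
      have := Int.sign_mul_abs n
      have h2 : |(n : ℝ)| = ((|n| : ℤ) : ℝ) := by push_cast; rfl
      rw [h2, ← Int.cast_mul, this]
    exact_mod_cast h1
  have hl0 : ((l:ℕ):ℂ) ≠ 0 := Nat.cast_ne_zero.mpr hl.ne'
  have e1 : ((1 / cc l : ℝ) : ℂ) * ((1 / cc l : ℝ) : ℂ) = (2 * (l : ℂ))⁻¹ := by
    calc ((1 / cc l : ℝ) : ℂ) * ((1 / cc l : ℝ) : ℂ)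
        = (((cc l : ℝ) : ℂ))⁻¹ * (((cc l : ℝ) : ℂ))⁻¹ := by push_cast; ring
      _ = ((((cc l : ℝ) : ℂ)) ^ 2)⁻¹ := by rw [← mul_inv, ← sq]
      _ = (2 * (l : ℂ))⁻¹ := by rw [hcc2]
  have e2 : (((2 * Real.pi * (n : ℝ) * cc l : ℝ) : ℂ) * Complex.I)
      * ((((2 * Real.pi * (n : ℝ) * cc l : ℝ)) : ℂ) * Complex.I)
      = -(8 * (l : ℂ) * (Real.pi : ℂ) ^ 2 * (n : ℂ) ^ 2) := by
    calc (((2 * Real.pi * (n : ℝ) * cc l : ℝ) : ℂ) * Complex.I)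
        * ((((2 * Real.pi * (n : ℝ) * cc l : ℝ)) : ℂ) * Complex.I)
        = (2 * (Real.pi : ℂ) * (n : ℂ)) ^ 2 * (((cc l : ℝ) : ℂ)) ^ 2 * Complex.I ^ 2 := by
          push_cast; ring
      _ = (2 * (Real.pi : ℂ) * (n : ℂ)) ^ 2 * (2 * (l : ℂ)) * (-1) := by
          rw [hcc2, Complex.I_sq]
      _ = -(8 * (l : ℂ) * (Real.pi : ℂ) ^ 2 * (n : ℂ) ^ 2) := by ring
  have e3 : ((4 * gam l n ^ 2 : ℝ) : ℂ) = 16 * (l : ℂ) ^ 2 * (Real.pi : ℂ) ^ 2 * (n : ℂ) ^ 2 := by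
    calc ((4 * gam l n ^ 2 : ℝ) : ℂ) = 4 * ((gam l n : ℝ) : ℂ) ^ 2 := by push_cast; ring
      _ = 4 * (2 * (l : ℂ) * (Real.pi : ℂ) * ((|(n : ℝ)| : ℝ) : ℂ)) ^ 2 := by rw [hgamC]
      _ = 16 * (l : ℂ) ^ 2 * (Real.pi : ℂ) ^ 2 * (n : ℂ) ^ 2 := by
          linear_combination (16 * (l : ℂ) ^ 2 * (Real.pi : ℂ) ^ 2) * habs
  have e4 : ((-(2 * gam l n * (2 * (lam : ℝ) + 1)) : ℝ) : ℂ)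
      = -(4 * (l : ℂ) * (Real.pi : ℂ) * ((|(n : ℝ)| : ℝ) : ℂ) * (2 * (lam : ℂ) + 1)) := by
    push_cast
    rw [hgamC]
    ring
  have hA : ((4 * gam l n ^ 2 : ℝ) : ℂ) * (((1 / cc l : ℝ) : ℂ) * ((1 / cc l : ℝ) : ℂ))
      + (((2 * Real.pi * (n : ℝ) * cc l : ℝ) : ℂ) * Complex.I)
        * (((2 * Real.pi * (n : ℝ) * cc l : ℝ) : ℂ) * Complex.I) = 0 := by
    rw [e1, e2, e3]
    field_simp
    ring
  have hB : ((-(2 * gam l n * (2 * (lam : ℝ) + 1)) : ℝ) : ℂ)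
        * (((1 / cc l : ℝ) : ℂ) * ((1 / cc l : ℝ) : ℂ)) * (-(1/4 : ℂ))
      + (1/4 : ℂ) * Complex.I * (α : ℂ) * (2 * (Real.pi : ℂ) * Complex.I * (n : ℂ))
      - ((Real.pi * |(n : ℝ)| / 2 * (2 * (lam : ℝ) + 1 - α * (n.sign : ℝ)) : ℝ) : ℂ) = 0 := by
    rw [e1, e4]
    push_cast
    field_simp
    ring_nf
    rw [Complex.I_sq]
    linear_combination (4 * (Real.pi:ℂ) * (α:ℂ)) * hsign
  linear_combination (-(1/4 : ℂ) * (E * Txx)) * hA + (E * T0) * hB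


end
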